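/- arXiv:2310.13128 — 4 statements merged into one kernel-verified Lean document; each statement's English description precedes it below -/
import Mathlib

section
/- Let $t \geq 1$ and $r \geq 1$ be integers and let $b_1,\dots,b_t$ be positive integers with $r \mid b_i$ for every $i$. Then the number of integer tuples $(C_1,\dots,C_t)$ satisfying $1 \leq C_i \leq b_i - 1$ for all $i$ and $r \mid \sum_{i=1}^t C_i$ equals $\frac{1}{r}\left[\prod_{i=1}^t (b_i-1) - (-1)^t\right] + (-1)^t$. -/
open Finset

private lemma card_filter_prod {α β : Type*} (s : Finset α) (t : Finset β)
    (P : α × β → Prop) [DecidablePred P] :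
    ((s ×ˢ t).filter P).card = ∑ x ∈ s, (t.filter fun y => P (x, y)).card := by
  simp_rw [Finset.card_filter]
  rw [Finset.sum_product]

private lemma count_aux (r b a : ℕ) (hr : 0 < r) (hb : 0 < b) (hrb : r ∣ b) :
    (((Finset.Icc 1 (b - 1)).filter (fun c => r ∣ a + c)).card : ℚ)
      = (b : ℚ) / r - (if r ∣ a then 1 else 0) := by
  have hmod : ∀ c : ℕ, (r ∣ a + c) ↔ (c ≡ a * (r - 1) [MOD r]) := by
    intro c
    have h1 : a + a * (r - 1) = a * r := by
      have : r = 1 + (r - 1) := by omega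
      nth_rewrite 2 [this]
      ring
    constructor
    · intro h
      have h2 : a + c ≡ a + a * (r - 1) [MOD r] := by
        rw [h1]
        exact (Nat.modEq_zero_iff_dvd.2 h).trans (Nat.modEq_zero_iff_dvd.2 ⟨a, mul_comm a r⟩).symm
      exact (Nat.ModEq.add_left_cancel' a h2)
    · intro h
      have h2 : a + c ≡ a * r [MOD r] := by rw [← h1]; exact Nat.ModEq.add_left a h
      exact Nat.modEq_zero_iff_dvd.1 (h2.trans (Nat.modEq_zero_iff_dvd.2 ⟨a, mul_comm a r⟩))
  have hcount : (((Finset.range b).filter (fun c => c ≡ a * (r - 1) [MOD r])).card : ℕ) = b / r := by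
    rw [← Nat.count_eq_card_filter_range, Nat.count_modEq_card b hr]
    simp [Nat.eq_zero_of_dvd_of_lt, (Nat.mod_eq_zero_of_dvd hrb)]
  have hsplit : Finset.range b = insert 0 (Finset.Icc 1 (b - 1)) := by
    ext x; simp only [Finset.mem_range, Finset.mem_insert, Finset.mem_Icc]; omega
  have h0 : ((Finset.range b).filter (fun c => r ∣ a + c)).card = b / r := by
    rw [Finset.filter_congr (fun c _ => (hmod c))]
    exact_mod_cast hcount
  rw [hsplit, Finset.filter_insert] at h0
  have hrQ : (r : ℚ) ≠ 0 := by positivity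
  have hcast : ((b / r : ℕ) : ℚ) = (b : ℚ) / r := by
    rw [Nat.cast_div hrb hrQ]
  by_cases ha : r ∣ a
  · have ha' : r ∣ a + 0 := by simpa using ha
    rw [if_pos ha', Finset.card_insert_of_notMem (by simp)] at h0
    have : (((Finset.Icc 1 (b - 1)).filter (fun c => r ∣ a + c)).card : ℚ) + 1
        = ((b / r : ℕ) : ℚ) := by exact_mod_cast congrArg (Nat.cast : ℕ → ℚ) h0
    rw [if_pos ha, ← hcast]
    linarith
  · have ha' : ¬ r ∣ a + 0 := by simpa using ha
    rw [if_neg ha'] at h0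
    rw [if_neg ha, ← hcast, h0, sub_zero]

private lemma key (r : ℕ) (hr : 0 < r) : ∀ (t : ℕ) (b : Fin t → ℕ), (∀ i, 0 < b i) →
    (∀ i, r ∣ b i) → ∀ a : ℕ,
    ((((Fintype.piFinset (fun i => Finset.Icc 1 (b i - 1))).filter
        (fun C : Fin t → ℕ => r ∣ (a + ∑ i, C i))).card : ℚ)) =
      ((∏ i, ((b i : ℚ) - 1)) - (-1) ^ t) / r + (if r ∣ a then (-1) ^ t else 0) := by
  intro t
  induction t with
  | zero =>
    intro b hb hrb a
    simp only [Finset.univ_eq_empty, Finset.sum_empty, Finset.prod_empty, pow_zero, add_zero]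
    by_cases h : r ∣ a
    · rw [Finset.filter_true_of_mem (fun _ _ => h)]
      simp [Fintype.card_piFinset, h]
    · rw [Finset.filter_false_of_mem (fun _ _ => h)]
      simp [h]
  | succ t ih =>
    intro b hb hrb a
    have e := (-1 : ℚ) ^ t
    -- bijection with product
    have hbij : ((Fintype.piFinset (fun i => Finset.Icc 1 (b i - 1))).filter
        (fun C : Fin (t+1) → ℕ => r ∣ (a + ∑ i, C i))).card
        = (((Finset.Icc 1 (b 0 - 1)) ×ˢ
            Fintype.piFinset (fun i : Fin t => Finset.Icc 1 (b i.succ - 1))).filter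
          (fun p : ℕ × (Fin t → ℕ) => r ∣ (a + p.1 + ∑ i, p.2 i))).card := by
      apply Finset.card_nbij' (fun C => (C 0, Fin.tail C)) (fun p => Fin.cons p.1 p.2)
      · intro C hC
        simp only [Finset.mem_coe, Finset.mem_filter, Fintype.mem_piFinset] at hC ⊢
        simp only [Finset.mem_product, Fintype.mem_piFinset]
        refine ⟨⟨hC.1 0, fun i => hC.1 i.succ⟩, ?_⟩
        have := hC.2
        rwa [Fin.sum_univ_succ, ← add_assoc] at this
      · intro p hp
        simp only [Finset.mem_coe, Finset.mem_filter, Finset.mem_product, Fintype.mem_piFinset] at hp ⊢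
        refine ⟨fun i => ?_, ?_⟩
        · induction i using Fin.cases with
          | zero => simpa using hp.1.1
          | succ j => simpa using hp.1.2 j
        · rw [Fin.sum_univ_succ]
          simp only [Fin.cons_zero, Fin.cons_succ]
          rw [← add_assoc]
          exact hp.2
      · intro C _; exact Fin.cons_self_tail C
      · intro p _; simp
    rw [hbij, card_filter_prod]
    push_cast
    have hsum : ∀ c ∈ Finset.Icc 1 (b 0 - 1),
        (((Fintype.piFinset (fun i : Fin t => Finset.Icc 1 (b i.succ - 1))).filter
          (fun C : Fin t → ℕ => r ∣ (a + c + ∑ i, C i))).card : ℚ)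
        = ((∏ i : Fin t, ((b i.succ : ℚ) - 1)) - (-1) ^ t) / r
            + (if r ∣ a + c then (-1) ^ t else 0) := by
      intro c _
      exact ih (fun i => b i.succ) (fun i => hb i.succ) (fun i => hrb i.succ) (a + c)
    rw [Finset.sum_congr rfl hsum, Finset.sum_add_distrib, Finset.sum_const, ← Finset.sum_filter,
      Finset.sum_const, Nat.card_Icc]
    have hcount := count_aux r (b 0) a hr (hb 0) (hrb 0)
    have hfilter : ((Finset.Icc 1 (b 0 - 1)).filter (fun c => r ∣ a + c)).card
        = ((Finset.Icc 1 (b 0 - 1)).filter (fun c => r ∣ a + c)).card := rfl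
    rw [Fin.prod_univ_succ]
    have hb0 : (1:ℚ) ≤ (b 0 : ℚ) := by exact_mod_cast hb 0
    have hcard : (((b 0 - 1 + 1 - 1 : ℕ)) : ℚ) = (b 0 : ℚ) - 1 := by
      have h1 : b 0 - 1 + 1 - 1 = b 0 - 1 := Nat.add_sub_cancel _ _
      rw [h1, Nat.cast_sub (hb 0), Nat.cast_one]
    rw [nsmul_eq_mul, nsmul_eq_mul, hcard, hcount, pow_succ]
    have hrQ : (r : ℚ) ≠ 0 := by positivity
    by_cases ha : r ∣ a <;> simp only [ha, if_true, if_false] <;> field_simp <;> ring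
    
/-- The number of integer tuples `(C₁, …, C_t)` with `1 ≤ Cᵢ ≤ bᵢ - 1` for all `i`
and `r ∣ ∑ Cᵢ` equals `(∏ (bᵢ - 1) - (-1)^t)/r + (-1)^t`, provided `r ∣ bᵢ` for all `i`. -/
theorem stmt_0 (t r : ℕ) (ht : 1 ≤ t) (hr : 1 ≤ r) (b : Fin t → ℕ)
    (hb : ∀ i, 0 < b i) (hrb : ∀ i, r ∣ b i) :
    ((((Fintype.piFinset (fun i => Finset.Icc 1 (b i - 1))).filter
        (fun C : Fin t → ℕ => r ∣ ∑ i, C i)).card : ℚ)) =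
      ((∏ i, ((b i : ℚ) - 1)) - (-1) ^ t) / r + (-1) ^ t := by
  have h := key r hr t b hb hrb 0
  simp only [zero_add, Nat.dvd_zero, if_true] at h  -- r ∣ 0
  convert h using 3
end

section
/- Let $p \geq 1$ and let $b_1,\dots,b_p$ be integers with $b_i \geq 2$. Set $a = \sum_{i=1}^p b_i$, $A = \sum_{i=1}^p b_i^2$ and $B = \prod_{i=1}^p (b_i - 1)$. Then $\sum_{t=1}^{p} \sum_{\tau \in S_p} \sum_{\mathbf{C}} \frac{1}{2t} \left( \sum_{i=1}^{t} C_{\tau(i)} \right) \left( \sum_{i=1}^{t} \left( b_{\tau(i)} - C_{\tau(i)} \right) \right) = \frac{p! \, B}{48} \left( A + 3a^2 + 4a \right)$, where the inner sum is over all integer tuples $\mathbf{C} = (C_1,\dots,C_p)$ with $1 \leq C_i \leq b_i - 1$. -/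
open Finset Equiv

-- single coordinate permutation sum
lemma permSum1 {n : ℕ} (g : Fin (n+1) → ℚ) (i : Fin (n+1)) :
    ∑ τ : Perm (Fin (n+1)), g (τ i) = (Nat.factorial n : ℚ) * ∑ k, g k := by
  have h0 : ∑ τ : Perm (Fin (n+1)), g (τ i) = ∑ τ : Perm (Fin (n+1)), g (τ 0) := by
    refine Fintype.sum_equiv (Equiv.mulRight (Equiv.swap 0 i)) _ _ (fun τ => ?_)
    simp [Equiv.Perm.mul_apply]
  rw [h0, ← Equiv.sum_comp (Equiv.Perm.decomposeFin (n := n)).symm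
    (fun τ => g (τ 0))]
  rw [Fintype.sum_prod_type]
  simp [Finset.sum_const, Fintype.card_perm, mul_comm, ← Finset.sum_mul]

lemma sum_succ_swap {n : ℕ} (h : Fin (n+2) → ℚ) (k : Fin (n+2)) :
    ∑ l : Fin (n+1), h (Equiv.swap 0 k l.succ) = (∑ m, h m) - h k := by
  have := Equiv.sum_comp (Equiv.swap (0 : Fin (n+2)) k) h
  rw [Fin.sum_univ_succ] at this
  simp only [Equiv.swap_apply_left] at this
  linarith [this]

lemma permSum2 {n : ℕ} (g h : Fin (n+2) → ℚ) (i j : Fin (n+2)) (hij : i ≠ j) :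
    ∑ τ : Perm (Fin (n+2)), g (τ i) * h (τ j) =
      (Nat.factorial n : ℚ) * ((∑ k, g k) * (∑ k, h k) - ∑ k, g k * h k) := by
  -- find σ with σ 0 = i, σ 1 = j
  set s1 := Equiv.swap (0 : Fin (n+2)) i 1 with hs1
  have hs1i : s1 ≠ i := by
    intro hcon
    have h01 : (1 : Fin (n+2)) = 0 := by
      apply (Equiv.swap (0 : Fin (n+2)) i).injective
      rw [← hs1, hcon, Equiv.swap_apply_left]
    exact one_ne_zero h01
  set σ : Perm (Fin (n+2)) := (Equiv.swap s1 j) * (Equiv.swap 0 i) with hσ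
  have hσ0 : σ 0 = i := by
    rw [hσ]
    simp only [Equiv.Perm.mul_apply, Equiv.swap_apply_left]
    exact Equiv.swap_apply_of_ne_of_ne hs1i.symm hij
  have hσ1 : σ 1 = j := by
    rw [hσ]
    simp only [Equiv.Perm.mul_apply, ← hs1, Equiv.swap_apply_left]
  have hre : ∑ τ : Perm (Fin (n+2)), g (τ i) * h (τ j)
      = ∑ τ : Perm (Fin (n+2)), g (τ 0) * h (τ 1) := by
    refine Fintype.sum_equiv (Equiv.mulRight σ) _ _ (fun τ => ?_)
    simp [Equiv.Perm.mul_apply, hσ0, hσ1]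
  rw [hre, ← Equiv.sum_comp (Equiv.Perm.decomposeFin (n := n+1)).symm
    (fun τ => g (τ 0) * h (τ 1)), Fintype.sum_prod_type]
  simp only [Equiv.Perm.decomposeFin_symm_apply_zero, Equiv.Perm.decomposeFin_symm_apply_one]
  have hinner : ∀ k : Fin (n+2), ∑ ρ : Perm (Fin (n+1)), g k * h (Equiv.swap 0 k (ρ 0).succ)
      = g k * ((Nat.factorial n : ℚ) * ((∑ m, h m) - h k)) := by
    intro k
    rw [← Finset.mul_sum, permSum1 (fun l => h (Equiv.swap 0 k l.succ)) 0, sum_succ_swap]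
  simp only [hinner]
  have e1 : ∀ x : Fin (n+2), g x * ((Nat.factorial n : ℚ) * ((∑ m, h m) - h x))
      = (Nat.factorial n : ℚ) * (∑ m, h m) * g x - (Nat.factorial n : ℚ) * (g x * h x) :=
    fun x => by ring
  simp only [e1, Finset.sum_sub_distrib, ← Finset.mul_sum]
  ring

lemma G1 (q : ℕ) : ∑ x ∈ Finset.Icc 1 q, (x : ℚ) = q * (q + 1) / 2 := by
  induction q with
  | zero => simp
  | succ n ih =>
      rw [Finset.sum_Icc_succ_top (by omega), ih]
      push_cast; ring

lemma G2 (q : ℕ) : ∑ x ∈ Finset.Icc 1 q, (x : ℚ) ^ 2 = q * (q + 1) * (2 * q + 1) / 6 := by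
  induction q with
  | zero => simp
  | succ n ih =>
      rw [Finset.sum_Icc_succ_top (by omega), ih]
      push_cast; ring

lemma cellC (m : ℕ) (hm : 2 ≤ m) : ∑ _x ∈ Finset.Icc 1 (m-1), (1:ℚ) = (m:ℚ) - 1 := by
  rw [Finset.sum_const, Nat.card_Icc]
  have : m - 1 + 1 - 1 = m - 1 := by omega
  rw [this, nsmul_eq_mul, Nat.cast_sub (by omega : 1 ≤ m)]
  ring

lemma cellX (m : ℕ) (hm : 2 ≤ m) :
    ∑ x ∈ Finset.Icc 1 (m-1), (x:ℚ) = ((m:ℚ) - 1) * m / 2 := by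
  rw [G1, Nat.cast_sub (by omega : 1 ≤ m)]
  push_cast; ring

lemma cellBX (m : ℕ) (hm : 2 ≤ m) :
    ∑ x ∈ Finset.Icc 1 (m-1), ((m:ℚ) - (x:ℚ)) = ((m:ℚ) - 1) * m / 2 := by
  rw [Finset.sum_sub_distrib, Finset.sum_const, Nat.card_Icc, cellX m hm]
  have : m - 1 + 1 - 1 = m - 1 := by omega
  rw [this, nsmul_eq_mul, Nat.cast_sub (by omega : 1 ≤ m)]
  push_cast; ring

lemma cellXBX (m : ℕ) (hm : 2 ≤ m) :
    ∑ x ∈ Finset.Icc 1 (m-1), (x:ℚ) * ((m:ℚ) - (x:ℚ))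
      = ((m:ℚ) - 1) * m * ((m:ℚ) + 1) / 6 := by
  have e1 : ∀ x : ℕ, (x:ℚ) * ((m:ℚ) - x) = (m:ℚ) * (x:ℚ) - (x:ℚ)^2 := fun x => by ring
  simp only [e1]
  rw [Finset.sum_sub_distrib, ← Finset.mul_sum, cellX m hm, G2,
    Nat.cast_sub (by omega : 1 ≤ m)]
  push_cast; ring

lemma coordA {p : ℕ} (b : Fin p → ℕ) (hb : ∀ i, 2 ≤ b i) (a : Fin p) :
    ∑ C ∈ Fintype.piFinset (fun i => Finset.Icc 1 (b i - 1)), (C a : ℚ) * ((b a : ℚ) - C a)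
    = (∏ k, ((b k : ℚ) - 1)) * ((b a : ℚ) * ((b a : ℚ) + 1) / 6) := by
  have hrw : ∀ C : Fin p → ℕ, (C a : ℚ) * ((b a : ℚ) - C a)
      = ∏ k, (if k = a then (C k : ℚ) * ((b k : ℚ) - C k) else 1) := by
    intro C
    rw [Finset.prod_ite_eq' Finset.univ a (fun k => (C k : ℚ) * ((b k : ℚ) - C k))]
    simp
  rw [Finset.sum_congr rfl (fun C _ => hrw C),
    ← Finset.prod_univ_sum (fun i => Finset.Icc 1 (b i - 1))
      (fun k x => if k = a then (x:ℚ) * ((b k:ℚ) - x) else 1)]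
  have hFa : (∑ x ∈ Finset.Icc 1 (b a - 1), if a = a then (x:ℚ) * ((b a:ℚ) - x) else 1)
      = ((b a : ℚ) - 1) * ((b a : ℚ) * ((b a : ℚ) + 1) / 6) := by
    simp only [eq_self_iff_true, if_true]
    rw [cellXBX (b a) (hb a)]; ring
  have hFk : ∀ k ∈ Finset.univ.erase a,
      (∑ x ∈ Finset.Icc 1 (b k - 1), if k = a then (x:ℚ) * ((b k:ℚ) - x) else 1)
      = ((b k : ℚ) - 1) := by
    intro k hk
    rw [Finset.sum_congr rfl (fun x _ => if_neg (Finset.mem_erase.mp hk).1), cellC (b k) (hb k)]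
  rw [← Finset.mul_prod_erase Finset.univ _ (Finset.mem_univ a), hFa,
      Finset.prod_congr rfl hFk,
      ← Finset.mul_prod_erase Finset.univ (fun k => (b k : ℚ) - 1) (Finset.mem_univ a)]
  ring

lemma coordB {p : ℕ} (b : Fin p → ℕ) (hb : ∀ i, 2 ≤ b i) (a a' : Fin p) (haa : a ≠ a') :
    ∑ C ∈ Fintype.piFinset (fun i => Finset.Icc 1 (b i - 1)),
        (C a : ℚ) * ((b a' : ℚ) - C a')
    = (∏ k, ((b k : ℚ) - 1)) * ((b a : ℚ) / 2) * ((b a' : ℚ) / 2) := by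
  have hrw : ∀ C : Fin p → ℕ, (C a : ℚ) * ((b a' : ℚ) - C a')
      = ∏ k, (if k = a then (C k : ℚ) else if k = a' then ((b k : ℚ) - C k) else 1) := by
    intro C
    rw [← Finset.mul_prod_erase Finset.univ _ (Finset.mem_univ a),
        ← Finset.mul_prod_erase (Finset.univ.erase a) _
          (Finset.mem_erase.mpr ⟨haa.symm, Finset.mem_univ a'⟩)]
    rw [if_pos rfl, if_neg haa.symm, if_pos rfl]
    rw [Finset.prod_eq_one (fun k hk => by
      rw [if_neg (Finset.mem_erase.mp (Finset.mem_erase.mp hk).2).1,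
          if_neg (Finset.mem_erase.mp hk).1])]
    ring
  rw [Finset.sum_congr rfl (fun C _ => hrw C),
    ← Finset.prod_univ_sum (fun i => Finset.Icc 1 (b i - 1))
      (fun k x => if k = a then (x:ℚ) else if k = a' then ((b k:ℚ) - x) else 1)]
  have hFa : (∑ x ∈ Finset.Icc 1 (b a - 1),
      if a = a then (x:ℚ) else if a = a' then ((b a:ℚ) - x) else 1)
      = ((b a : ℚ) - 1) * ((b a : ℚ) / 2) := by
    simp only [eq_self_iff_true, if_true]
    rw [cellX (b a) (hb a)]; ring
  have hFa' : (∑ x ∈ Finset.Icc 1 (b a' - 1),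
      if a' = a then (x:ℚ) else if a' = a' then ((b a':ℚ) - x) else 1)
      = ((b a' : ℚ) - 1) * ((b a' : ℚ) / 2) := by
    simp only [if_neg haa.symm, eq_self_iff_true, if_true]
    rw [cellBX (b a') (hb a')]; ring
  have hFk : ∀ k ∈ (Finset.univ.erase a).erase a',
      (∑ x ∈ Finset.Icc 1 (b k - 1),
        if k = a then (x:ℚ) else if k = a' then ((b k:ℚ) - x) else 1)
      = ((b k : ℚ) - 1) := by
    intro k hk
    rw [Finset.sum_congr rfl (fun x _ => by
      rw [if_neg (Finset.mem_erase.mp (Finset.mem_erase.mp hk).2).1,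
          if_neg (Finset.mem_erase.mp hk).1]), cellC (b k) (hb k)]
  rw [← Finset.mul_prod_erase Finset.univ _ (Finset.mem_univ a),
      ← Finset.mul_prod_erase (Finset.univ.erase a) _
        (Finset.mem_erase.mpr ⟨haa.symm, Finset.mem_univ a'⟩),
      hFa, hFa', Finset.prod_congr rfl hFk,
      ← Finset.mul_prod_erase Finset.univ (fun k => (b k : ℚ) - 1) (Finset.mem_univ a),
      ← Finset.mul_prod_erase (Finset.univ.erase a) (fun k => (b k : ℚ) - 1)
        (Finset.mem_erase.mpr ⟨haa.symm, Finset.mem_univ a'⟩)]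
  ring

lemma cardI {p t : ℕ} (ht : t ≤ p) :
    (Finset.univ.filter (fun i : Fin p => (i : ℕ) < t)).card = t := by
  have : Finset.univ.filter (fun i : Fin p => (i : ℕ) < t)
      = Finset.map (Fin.castLEEmb ht) Finset.univ := by
    ext i
    simp only [Finset.mem_filter, Finset.mem_univ, true_and, Finset.mem_map,
      Fin.coe_castLEEmb]
    constructor
    · intro hi; exact ⟨⟨(i : ℕ), hi⟩, rfl⟩
    · rintro ⟨j, rfl⟩; exact j.isLt
  rw [this, Finset.card_map, Finset.card_univ, Fintype.card_fin]

lemma stepA {p : ℕ} (b : Fin p → ℕ) (hb : ∀ i, 2 ≤ b i) (I : Finset (Fin p))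
    (τ : Perm (Fin p)) :
    ∑ C ∈ Fintype.piFinset (fun i => Finset.Icc 1 (b i - 1)),
        (∑ i ∈ I, (C (τ i) : ℚ)) * (∑ i ∈ I, ((b (τ i) : ℚ) - (C (τ i) : ℚ)))
    = (∏ k, ((b k : ℚ) - 1)) *
        ((∑ i ∈ I, (b (τ i) : ℚ) / 2) ^ 2 - (∑ i ∈ I, ((b (τ i) : ℚ) / 2) ^ 2)
          + ∑ i ∈ I, (b (τ i) : ℚ) * ((b (τ i) : ℚ) + 1) / 6) := by
  set Bq := ∏ k, ((b k : ℚ) - 1) with hBq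
  have key : ∀ i ∈ I, ∀ j ∈ I,
      (∑ C ∈ Fintype.piFinset (fun i => Finset.Icc 1 (b i - 1)),
        (C (τ i) : ℚ) * ((b (τ j) : ℚ) - (C (τ j) : ℚ)))
      = Bq * ((b (τ i) : ℚ) / 2) * ((b (τ j) : ℚ) / 2)
        + (if i = j then Bq * ((b (τ i) : ℚ) * ((b (τ i) : ℚ) + 1) / 6)
            - Bq * ((b (τ i) : ℚ) / 2) * ((b (τ i) : ℚ) / 2) else 0) := by
    intro i _ j _
    by_cases h : i = j
    · subst h
      rw [if_pos rfl, coordA b hb (τ i)]; ring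
    · rw [if_neg h, coordB b hb (τ i) (τ j) (fun hc => h (τ.injective hc))]; ring
  calc ∑ C ∈ Fintype.piFinset (fun i => Finset.Icc 1 (b i - 1)),
        (∑ i ∈ I, (C (τ i) : ℚ)) * (∑ i ∈ I, ((b (τ i) : ℚ) - (C (τ i) : ℚ)))
      = ∑ C ∈ Fintype.piFinset (fun i => Finset.Icc 1 (b i - 1)),
          ∑ i ∈ I, ∑ j ∈ I, (C (τ i) : ℚ) * ((b (τ j) : ℚ) - (C (τ j) : ℚ)) := by
        exact Finset.sum_congr rfl fun C _ => by rw [Finset.sum_mul_sum]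
    _ = ∑ i ∈ I, ∑ j ∈ I, ∑ C ∈ Fintype.piFinset (fun i => Finset.Icc 1 (b i - 1)),
          (C (τ i) : ℚ) * ((b (τ j) : ℚ) - (C (τ j) : ℚ)) := by
        rw [Finset.sum_comm]
        exact Finset.sum_congr rfl fun i _ => Finset.sum_comm
    _ = ∑ i ∈ I, ∑ j ∈ I, (Bq * ((b (τ i) : ℚ) / 2) * ((b (τ j) : ℚ) / 2)
        + (if i = j then Bq * ((b (τ i) : ℚ) * ((b (τ i) : ℚ) + 1) / 6)
            - Bq * ((b (τ i) : ℚ) / 2) * ((b (τ i) : ℚ) / 2) else 0)) :=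
        Finset.sum_congr rfl fun i hi => Finset.sum_congr rfl fun j hj => key i hi j hj
    _ = ∑ i ∈ I, (Bq * ((b (τ i) : ℚ) / 2) * (∑ j ∈ I, (b (τ j) : ℚ) / 2)
        + (Bq * ((b (τ i) : ℚ) * ((b (τ i) : ℚ) + 1) / 6)
            - Bq * ((b (τ i) : ℚ) / 2) * ((b (τ i) : ℚ) / 2))) := by
        refine Finset.sum_congr rfl fun i hi => ?_
        rw [Finset.sum_add_distrib, Finset.sum_ite_eq, if_pos hi, ← Finset.mul_sum]
    _ = Bq * ((∑ i ∈ I, (b (τ i) : ℚ) / 2) ^ 2 - (∑ i ∈ I, ((b (τ i) : ℚ) / 2) ^ 2)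
          + ∑ i ∈ I, (b (τ i) : ℚ) * ((b (τ i) : ℚ) + 1) / 6) := by
        rw [Finset.sum_add_distrib, Finset.sum_sub_distrib]
        have e1 : ∀ i : Fin p, Bq * ((b (τ i) : ℚ) / 2) * (∑ j ∈ I, (b (τ j) : ℚ) / 2)
            = ((b (τ i) : ℚ) / 2) * (Bq * (∑ j ∈ I, (b (τ j) : ℚ) / 2)) := fun i => by ring
        have e2 : ∀ i : Fin p, Bq * ((b (τ i) : ℚ) / 2) * ((b (τ i) : ℚ) / 2)
            = Bq * ((b (τ i) : ℚ) / 2) ^ 2 := fun i => by ring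
        simp only [e1, e2, ← Finset.sum_mul, ← Finset.mul_sum]
        ring

lemma permSum1' {p : ℕ} (hp : 1 ≤ p) (g : Fin p → ℚ) (i : Fin p) :
    ∑ τ : Perm (Fin p), g (τ i) = (Nat.factorial (p-1) : ℚ) * ∑ k, g k := by
  obtain ⟨n, rfl⟩ := Nat.exists_eq_add_of_le' hp
  simpa using permSum1 g i

lemma permSum2' {p : ℕ} (g h : Fin p → ℚ) (i j : Fin p) (hij : i ≠ j) :
    ∑ τ : Perm (Fin p), g (τ i) * h (τ j)
      = (Nat.factorial (p-2) : ℚ) * ((∑ k, g k) * (∑ k, h k) - ∑ k, g k * h k) := by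
  have hnt : Nontrivial (Fin p) := ⟨⟨i, j, hij⟩⟩
  have hp2 : 2 ≤ p := by
    have := Fintype.one_lt_card (α := Fin p)
    simp at this; omega
  obtain ⟨n, rfl⟩ := Nat.exists_eq_add_of_le' hp2
  simpa using permSum2 g h i j hij

lemma stepB {p : ℕ} (hp : 1 ≤ p) (M L : Fin p → ℚ) (I : Finset (Fin p)) :
    ∑ τ : Perm (Fin p),
        ((∑ i ∈ I, M (τ i)) ^ 2 - (∑ i ∈ I, (M (τ i)) ^ 2) + ∑ i ∈ I, L (τ i))
    = ((I.card : ℚ) ^ 2 - (I.card : ℚ)) * (Nat.factorial (p-2) : ℚ)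
        * ((∑ k, M k) ^ 2 - ∑ k, (M k) ^ 2)
      + (I.card : ℚ) * (Nat.factorial (p-1) : ℚ) * ∑ k, L k := by
  set O := (Nat.factorial (p-2) : ℚ) * ((∑ k, M k) ^ 2 - ∑ k, (M k) ^ 2) with hO
  set Dg := (Nat.factorial (p-1) : ℚ) * ∑ k, (M k) ^ 2 with hDg
  have key : ∀ i j : Fin p, (∑ τ : Perm (Fin p), M (τ i) * M (τ j))
      = O + (if i = j then Dg - O else 0) := by
    intro i j
    by_cases h : i = j
    · subst h
      rw [if_pos rfl]
      have h1 : ∑ τ : Perm (Fin p), M (τ i) * M (τ i)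
          = (Nat.factorial (p-1) : ℚ) * ∑ k, M k * M k :=
        permSum1' hp (fun k => M k * M k) i
      rw [h1, Finset.sum_congr rfl (fun k _ => (pow_two (M k)).symm)]
      ring
    · rw [if_neg h, permSum2' M M i j h,
        Finset.sum_congr rfl (fun k _ => (pow_two (M k)).symm)]
      rw [hO]; ring
  have hT2 : ∑ τ : Perm (Fin p), ∑ i ∈ I, (M (τ i)) ^ 2
      = (I.card : ℚ) * Dg := by
    rw [Finset.sum_comm,
      Finset.sum_congr rfl (fun i _ => permSum1' hp (fun k => (M k) ^ 2) i),
      Finset.sum_const, nsmul_eq_mul]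
  have hT3 : ∑ τ : Perm (Fin p), ∑ i ∈ I, L (τ i)
      = (I.card : ℚ) * ((Nat.factorial (p-1) : ℚ) * ∑ k, L k) := by
    rw [Finset.sum_comm, Finset.sum_congr rfl (fun i _ => permSum1' hp L i),
      Finset.sum_const, nsmul_eq_mul]
  have hT1 : ∑ τ : Perm (Fin p), (∑ i ∈ I, M (τ i)) ^ 2
      = (I.card : ℚ) * ((I.card : ℚ) * O + (Dg - O)) := by
    calc ∑ τ : Perm (Fin p), (∑ i ∈ I, M (τ i)) ^ 2
        = ∑ τ : Perm (Fin p), ∑ i ∈ I, ∑ j ∈ I, M (τ i) * M (τ j) :=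
          Finset.sum_congr rfl fun τ _ => by rw [pow_two, Finset.sum_mul_sum]
      _ = ∑ i ∈ I, ∑ j ∈ I, ∑ τ : Perm (Fin p), M (τ i) * M (τ j) := by
          rw [Finset.sum_comm]
          exact Finset.sum_congr rfl fun i _ => Finset.sum_comm
      _ = ∑ i ∈ I, ∑ j ∈ I, (O + (if i = j then Dg - O else 0)) :=
          Finset.sum_congr rfl fun i _ => Finset.sum_congr rfl fun j _ => key i j
      _ = ∑ i ∈ I, ((I.card : ℚ) * O + (Dg - O)) := by
          refine Finset.sum_congr rfl fun i hi => ?_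
          rw [Finset.sum_add_distrib, Finset.sum_ite_eq, if_pos hi,
            Finset.sum_const, nsmul_eq_mul]
      _ = (I.card : ℚ) * ((I.card : ℚ) * O + (Dg - O)) := by
          rw [Finset.sum_const, nsmul_eq_mul]
  rw [Finset.sum_add_distrib, Finset.sum_sub_distrib, hT1, hT2, hT3]
  ring

lemma GtM1 (p : ℕ) : ∑ t ∈ Finset.Icc 1 p, ((t : ℚ) - 1) = (p : ℚ) * ((p : ℚ) - 1) / 2 := by
  induction p with
  | zero => simp
  | succ n ih =>
      rw [Finset.sum_Icc_succ_top (by omega), ih]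
      push_cast; ring

/-- The number of 1-cells: `∑_{t,τ,C} (1/(2t)) Q₁ Q₂ = (p!B/48)(A + 3a² + 4a)`, where
`Q₁ = ∑_{i=1}^t C_{τ(i)}`, `Q₂ = ∑_{i=1}^t (b_{τ(i)} - C_{τ(i)})`, `a = ∑ bᵢ`,
`A = ∑ bᵢ²`, `B = ∏ (bᵢ - 1)`, and `C` ranges over tuples with `1 ≤ Cᵢ ≤ bᵢ - 1`. -/
theorem stmt_6 (p : ℕ) (hp : 1 ≤ p) (b : Fin p → ℕ) (hb : ∀ i, 2 ≤ b i) :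
    ∑ t ∈ Finset.Icc 1 p, ∑ τ : Equiv.Perm (Fin p),
      ∑ C ∈ Fintype.piFinset (fun i => Finset.Icc 1 (b i - 1)),
        (1 / (2 * (t : ℚ))) *
          ((∑ i ∈ Finset.univ.filter (fun i : Fin p => (i : ℕ) < t), (C (τ i) : ℚ)) *
           (∑ i ∈ Finset.univ.filter (fun i : Fin p => (i : ℕ) < t),
              ((b (τ i) : ℚ) - (C (τ i) : ℚ))))
    = (Nat.factorial p : ℚ) * (∏ i, ((b i : ℚ) - 1)) / 48 *
        ((∑ i, (b i : ℚ) ^ 2) + 3 * (∑ i, (b i : ℚ)) ^ 2 + 4 * ∑ i, (b i : ℚ)) := by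
  classical
  set Bq := ∏ i, ((b i : ℚ) - 1) with hBq
  set SM := ∑ k, (b k : ℚ) / 2 with hSM
  set PM := ∑ k, ((b k : ℚ) / 2) ^ 2 with hPM
  set SL := ∑ k, (b k : ℚ) * ((b k : ℚ) + 1) / 6 with hSL
  have main : ∀ t ∈ Finset.Icc 1 p,
      (∑ τ : Equiv.Perm (Fin p),
        ∑ C ∈ Fintype.piFinset (fun i => Finset.Icc 1 (b i - 1)),
          (1 / (2 * (t : ℚ))) *
            ((∑ i ∈ Finset.univ.filter (fun i : Fin p => (i : ℕ) < t), (C (τ i) : ℚ)) *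
             (∑ i ∈ Finset.univ.filter (fun i : Fin p => (i : ℕ) < t),
                ((b (τ i) : ℚ) - (C (τ i) : ℚ)))))
      = ((t : ℚ) - 1) * (Bq * ((Nat.factorial (p-2) : ℚ) * (SM ^ 2 - PM)) / 2)
        + Bq * ((Nat.factorial (p-1) : ℚ) * SL) / 2 := by
    intro t ht
    obtain ⟨ht1, ht2⟩ := Finset.mem_Icc.mp ht
    set I := Finset.univ.filter (fun i : Fin p => (i : ℕ) < t) with hI
    have hcard : I.card = t := cardI ht2
    have htne : (t : ℚ) ≠ 0 := Nat.cast_ne_zero.mpr (by omega)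
    have hstep : ∀ τ : Equiv.Perm (Fin p),
        (∑ C ∈ Fintype.piFinset (fun i => Finset.Icc 1 (b i - 1)),
          (1 / (2 * (t : ℚ))) *
            ((∑ i ∈ I, (C (τ i) : ℚ)) * (∑ i ∈ I, ((b (τ i) : ℚ) - (C (τ i) : ℚ)))))
        = (1 / (2 * (t : ℚ))) *
            (Bq * ((∑ i ∈ I, (b (τ i) : ℚ) / 2) ^ 2 - (∑ i ∈ I, ((b (τ i) : ℚ) / 2) ^ 2)
              + ∑ i ∈ I, (b (τ i) : ℚ) * ((b (τ i) : ℚ) + 1) / 6)) := by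
      intro τ
      rw [← Finset.mul_sum, stepA b hb I τ]
    rw [Finset.sum_congr rfl (fun τ _ => hstep τ), ← Finset.mul_sum, ← Finset.mul_sum]
    have hB := stepB hp (fun k => (b k : ℚ) / 2) (fun k => (b k : ℚ) * ((b k : ℚ) + 1) / 6) I
    rw [hB, hcard, ← hSM, ← hPM, ← hSL]
    field_simp
  rw [Finset.sum_congr rfl main, Finset.sum_add_distrib, ← Finset.sum_mul, GtM1,
    Finset.sum_const, Nat.card_Icc, Nat.add_sub_cancel, nsmul_eq_mul]
  have hSM' : SM = (∑ i, (b i : ℚ)) / 2 := by rw [hSM, Finset.sum_div]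
  have hPM' : PM = (∑ i, (b i : ℚ) ^ 2) / 4 := by
    rw [hPM, Finset.sum_div]
    exact Finset.sum_congr rfl fun k _ => by ring
  have hSL' : SL = ((∑ i, (b i : ℚ) ^ 2) + ∑ i, (b i : ℚ)) / 6 := by
    rw [hSL]
    have e : ∀ k : Fin p, (b k : ℚ) * ((b k : ℚ) + 1) / 6 = (b k : ℚ) ^ 2 / 6 + (b k : ℚ) / 6 :=
      fun k => by ring
    simp only [e, Finset.sum_add_distrib, ← Finset.sum_div]
    ring
  rw [hSM', hPM', hSL']
  rcases Nat.lt_or_ge p 2 with h2 | h2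
  · have hp1 : p = 1 := by omega
    subst hp1
    simp only [Fin.sum_univ_one]
    norm_num [Nat.factorial]
    ring
  · obtain ⟨n, rfl⟩ := Nat.exists_eq_add_of_le' h2
    have e1 : n + 2 - 1 = n + 1 := by omega
    have e2 : n + 2 - 2 = n := by omega
    rw [e1, e2, Nat.factorial_succ (n+1), Nat.factorial_succ n]
    push_cast
    ring
end

section
/- Let $p \geq 1$ and let $b_1,\dots,b_p$ be integers with $b_i \geq 2$. Set $a = \sum_{i=1}^p b_i$, $A = \sum_{i=1}^p b_i^2$ and $B = \prod_{i=1}^p (b_i - 1)$. Then $\sum_{t=1}^{p} \sum_{\tau \in S_p} \sum_{\mathbf{C}} \frac{1}{2t} \sum_{i=1}^{t} \left[ 2 C_{\tau(i)} \left( b_{\tau(i)} - C_{\tau(i)} \right) - b_{\tau(i)} + 1 \right] = \frac{p! \, B}{6} \left( A - 2a + 3p \right)$, where the inner sum is over all integer tuples $\mathbf{C} = (C_1,\dots,C_p)$ with $1 \leq C_i \leq b_i - 1$. -/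
lemma aux_sum_Icc_id (n : ℕ) : ∑ c ∈ Finset.Icc 1 n, (c : ℚ) = n * (n + 1) / 2 := by
  induction n with
  | zero => simp
  | succ n ih =>
    rw [Finset.sum_Icc_succ_top (by omega), ih]
    push_cast
    ring

lemma aux_sum_Icc_sq (n : ℕ) :
    ∑ c ∈ Finset.Icc 1 n, (c : ℚ) ^ 2 = n * (n + 1) * (2 * n + 1) / 6 := by
  induction n with
  | zero => simp
  | succ n ih =>
    rw [Finset.sum_Icc_succ_top (by omega), ih]
    push_cast
    ring

lemma aux_sum_S (m : ℕ) (hm : 2 ≤ m) :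
    ∑ c ∈ Finset.Icc 1 (m - 1), (2 * (c : ℚ) * ((m : ℚ) - (c : ℚ)) - (m : ℚ) + 1)
      = ((m : ℚ) - 1) * ((m : ℚ) ^ 2 - 2 * (m : ℚ) + 3) / 3 := by
  have hn : ((m - 1 : ℕ) : ℚ) = (m : ℚ) - 1 := by
    have : 1 ≤ m := by omega
    push_cast [Nat.cast_sub this]; ring
  calc ∑ c ∈ Finset.Icc 1 (m - 1), (2 * (c : ℚ) * ((m : ℚ) - (c : ℚ)) - (m : ℚ) + 1)
      = ∑ c ∈ Finset.Icc 1 (m - 1),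
          (2 * (m : ℚ) * (c : ℚ) - 2 * (c : ℚ) ^ 2 + (1 - (m : ℚ))) := by
        refine Finset.sum_congr rfl fun c _ => by ring
    _ = 2 * (m : ℚ) * (∑ c ∈ Finset.Icc 1 (m - 1), (c : ℚ))
          - 2 * (∑ c ∈ Finset.Icc 1 (m - 1), (c : ℚ) ^ 2)
          + ((m - 1 : ℕ) : ℚ) * (1 - (m : ℚ)) := by
        rw [Finset.sum_add_distrib, Finset.sum_sub_distrib, ← Finset.mul_sum,
          ← Finset.mul_sum, Finset.sum_const, Nat.card_Icc]
        simp [nsmul_eq_mul]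
    _ = ((m : ℚ) - 1) * ((m : ℚ) ^ 2 - 2 * (m : ℚ) + 3) / 3 := by
        rw [aux_sum_Icc_id, aux_sum_Icc_sq, hn]
        ring

/-- Sum over `piFinset` of a function of one coordinate. -/
lemma aux_piFinset_coord {p : ℕ} (s : Fin p → Finset ℕ) (k : Fin p) (g : ℕ → ℚ) :
    ∑ C ∈ Fintype.piFinset s, g (C k)
      = (∏ j ∈ Finset.univ.erase k, ((s j).card : ℚ)) * ∑ c ∈ s k, g c := by
  have h1 : ∀ C : Fin p → ℕ, g (C k) = ∏ i, (if i = k then g (C i) else 1) := by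
    intro C
    rw [Finset.prod_eq_single k (fun j _ hj => if_neg hj) (fun hk => absurd (Finset.mem_univ k) hk),
      if_pos rfl]
  calc ∑ C ∈ Fintype.piFinset s, g (C k)
      = ∑ C ∈ Fintype.piFinset s, ∏ i, (if i = k then g (C i) else 1) :=
        Finset.sum_congr rfl fun C _ => h1 C
    _ = ∏ i, ∑ c ∈ s i, (if i = k then g c else 1) := by
        rw [Finset.prod_univ_sum s (fun i c => if i = k then g c else 1)]
    _ = (∑ c ∈ s k, g c) * ∏ j ∈ Finset.univ.erase k, ∑ c ∈ s j, (1 : ℚ) := by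
        rw [← Finset.mul_prod_erase Finset.univ _ (Finset.mem_univ k)]
        simp only [if_pos rfl]
        congr 1
        refine Finset.prod_congr rfl fun j hj => ?_
        have : j ≠ k := (Finset.mem_erase.mp hj).1
        simp [this]
    _ = (∏ j ∈ Finset.univ.erase k, ((s j).card : ℚ)) * ∑ c ∈ s k, g c := by
        rw [mul_comm]
        congr 1
        refine Finset.prod_congr rfl fun j _ => ?_
        simp
  
/-- Sum over all permutations of `f (τ i)`. -/
lemma aux_perm_sum {p : ℕ} (hp : 1 ≤ p) (f : Fin p → ℚ) (i : Fin p) :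
    ∑ τ : Equiv.Perm (Fin p), f (τ i) = ((p - 1).factorial : ℚ) * ∑ k, f k := by
  have hsym : ∀ i' : Fin p,
      ∑ τ : Equiv.Perm (Fin p), f (τ i') = ∑ τ : Equiv.Perm (Fin p), f (τ i) := by
    intro i'
    refine Fintype.sum_equiv (Equiv.mulRight (Equiv.swap i i'))
      (fun τ => f (τ i')) (fun τ => f (τ i)) fun τ => ?_
    simp [Equiv.Perm.mul_apply, Equiv.swap_apply_left]
  have hmul : (p : ℚ) * ∑ τ : Equiv.Perm (Fin p), f (τ i)
      = (p.factorial : ℚ) * ∑ k, f k := by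
    calc (p : ℚ) * ∑ τ : Equiv.Perm (Fin p), f (τ i)
        = ∑ i' : Fin p, ∑ τ : Equiv.Perm (Fin p), f (τ i') := by
          rw [Finset.sum_congr rfl fun i' _ => hsym i', Finset.sum_const]
          simp [nsmul_eq_mul]
      _ = ∑ τ : Equiv.Perm (Fin p), ∑ i' : Fin p, f (τ i') := Finset.sum_comm
      _ = ∑ _τ : Equiv.Perm (Fin p), ∑ k, f k :=
          Finset.sum_congr rfl fun τ _ => Equiv.sum_comp τ f
      _ = (p.factorial : ℚ) * ∑ k, f k := by
          rw [Finset.sum_const]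
          simp [nsmul_eq_mul, Fintype.card_perm]
  obtain ⟨n, rfl⟩ : ∃ n, p = n + 1 := ⟨p - 1, by omega⟩
  have hp0 : ((n + 1 : ℕ) : ℚ) ≠ 0 := by positivity
  refine mul_left_cancel₀ hp0 ?_
  rw [hmul]
  simp only [Nat.add_sub_cancel, Nat.factorial_succ]
  push_cast
  ring

/-- The number of corners of 4-degenerate cells:
`∑_{t,τ,C} (1/(2t)) ∑_{i=1}^t [2C_{τ(i)}(b_{τ(i)} - C_{τ(i)}) - b_{τ(i)} + 1]
= (p!B/6)(A - 2a + 3p)`. -/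
theorem stmt_7 (p : ℕ) (hp : 1 ≤ p) (b : Fin p → ℕ) (hb : ∀ i, 2 ≤ b i) :
    ∑ t ∈ Finset.Icc 1 p, ∑ τ : Equiv.Perm (Fin p),
      ∑ C ∈ Fintype.piFinset (fun i => Finset.Icc 1 (b i - 1)),
        (1 / (2 * (t : ℚ))) *
          ∑ i ∈ Finset.univ.filter (fun i : Fin p => (i : ℕ) < t),
            (2 * (C (τ i) : ℚ) * ((b (τ i) : ℚ) - (C (τ i) : ℚ)) - (b (τ i) : ℚ) + 1)
    = (Nat.factorial p : ℚ) * (∏ i, ((b i : ℚ) - 1)) / 6 *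
        ((∑ i, (b i : ℚ) ^ 2) - 2 * (∑ i, (b i : ℚ)) + 3 * (p : ℚ)) := by
  set B : ℚ := ∏ i, ((b i : ℚ) - 1) with hB
  set h : Fin p → ℚ := fun k => B * (((b k : ℚ)) ^ 2 - 2 * (b k : ℚ) + 3) / 3 with hdef
  -- cardinality of the coordinate intervals
  have hcardIcc : ∀ j : Fin p, (((Finset.Icc 1 (b j - 1)).card : ℕ) : ℚ) = (b j : ℚ) - 1 := by
    intro j
    rw [Nat.card_Icc]
    have h2 := hb j
    have : b j - 1 + 1 - 1 = b j - 1 := by omega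
    rw [this, Nat.cast_sub (by omega)]
    simp
  -- the sum over C of the summand at coordinate k
  have hC : ∀ k : Fin p,
      ∑ C ∈ Fintype.piFinset (fun i => Finset.Icc 1 (b i - 1)),
        (2 * (C k : ℚ) * ((b k : ℚ) - (C k : ℚ)) - (b k : ℚ) + 1) = h k := by
    intro k
    have := aux_piFinset_coord (fun i => Finset.Icc 1 (b i - 1)) k
      (fun c => 2 * (c : ℚ) * ((b k : ℚ) - (c : ℚ)) - (b k : ℚ) + 1)
    rw [this, aux_sum_S (b k) (hb k)]
    have hprod : ∀ j ∈ Finset.univ.erase k,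
        (((Finset.Icc 1 (b j - 1)).card : ℕ) : ℚ) = (b j : ℚ) - 1 := fun j _ => hcardIcc j
    rw [Finset.prod_congr rfl hprod, hdef, hB,
      ← Finset.mul_prod_erase Finset.univ (fun i => (b i : ℚ) - 1) (Finset.mem_univ k)]
    ring
  -- rewrite inner triple sum
  have hstep : ∀ t ∈ Finset.Icc 1 p,
      ∑ τ : Equiv.Perm (Fin p),
        ∑ C ∈ Fintype.piFinset (fun i => Finset.Icc 1 (b i - 1)),
          (1 / (2 * (t : ℚ))) *
            ∑ i ∈ Finset.univ.filter (fun i : Fin p => (i : ℕ) < t),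
              (2 * (C (τ i) : ℚ) * ((b (τ i) : ℚ) - (C (τ i) : ℚ)) - (b (τ i) : ℚ) + 1)
      = ((p - 1).factorial : ℚ) / 2 * ∑ k, h k := by
    intro t ht
    rw [Finset.mem_Icc] at ht
    have ht1 : 1 ≤ t := ht.1
    have htp : t ≤ p := ht.2
    have hcardt : (Finset.univ.filter (fun i : Fin p => (i : ℕ) < t)).card = t := by
      rw [Finset.card_filter]
      rw [Fin.sum_univ_eq_sum_range (fun j => if j < t then 1 else 0) p]
      have : Finset.range t = (Finset.range p).filter (fun j => j < t) := by
        ext j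
        simp only [Finset.mem_range, Finset.mem_filter]
        omega
      rw [← Finset.sum_filter, ← this]
      simp
    have hτ : ∀ τ : Equiv.Perm (Fin p),
        ∑ C ∈ Fintype.piFinset (fun i => Finset.Icc 1 (b i - 1)),
          (1 / (2 * (t : ℚ))) *
            ∑ i ∈ Finset.univ.filter (fun i : Fin p => (i : ℕ) < t),
              (2 * (C (τ i) : ℚ) * ((b (τ i) : ℚ) - (C (τ i) : ℚ)) - (b (τ i) : ℚ) + 1)
        = (1 / (2 * (t : ℚ))) *
            ∑ i ∈ Finset.univ.filter (fun i : Fin p => (i : ℕ) < t), h (τ i) := by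
      intro τ
      rw [← Finset.mul_sum, Finset.sum_comm]
      congr 1
      exact Finset.sum_congr rfl fun i _ => hC (τ i)
    rw [Finset.sum_congr rfl fun τ _ => hτ τ, ← Finset.mul_sum, Finset.sum_comm]
    rw [Finset.sum_congr rfl fun i _ => aux_perm_sum hp h i]
    rw [Finset.sum_const, hcardt, nsmul_eq_mul]
    have ht0 : (t : ℚ) ≠ 0 := by
      have : 0 < t := ht1
      positivity
    field_simp
  rw [Finset.sum_congr rfl hstep, Finset.sum_const, Nat.card_Icc, nsmul_eq_mul]
  -- compute ∑ h
  have hsumh : ∑ k, h k = B * ((∑ i, (b i : ℚ) ^ 2) - 2 * (∑ i, (b i : ℚ)) + 3 * (p : ℚ)) / 3 := by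
    simp only [hdef]
    rw [← Finset.sum_div, ← Finset.mul_sum]
    congr 2
    rw [Finset.sum_add_distrib, Finset.sum_sub_distrib, ← Finset.mul_sum, Finset.sum_const]
    simp only [nsmul_eq_mul, Finset.card_univ, Fintype.card_fin]
    ring
  rw [hsumh]
  have hfact : (p.factorial : ℚ) = (p : ℚ) * ((p - 1).factorial : ℚ) := by
    obtain ⟨n, rfl⟩ : ∃ n, p = n + 1 := ⟨p - 1, by omega⟩
    simp only [Nat.add_sub_cancel, Nat.factorial_succ]
    push_cast
    ring
  have hpp : ((p + 1 - 1 : ℕ) : ℚ) = (p : ℚ) := by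
    have : p + 1 - 1 = p := by omega
    rw [this]
  rw [hpp, hfact]
  ring
end

section
/- Let $p \geq 1$, let $r \geq 1$, and let $b_1,\dots,b_p$ be integers with $b_i \geq 2$ and $r \mid b_i$ for every $i$. Set $a = \sum_{i=1}^p b_i$ and $B = \prod_{i=1}^p (b_i - 1)$. Then $\sum_{t=1}^{p} \frac{1}{t} \sum_{\tau \in S_p} \sum_{\substack{\mathbf{C} \\ r \mid \sum_{i=1}^{t} C_{\tau(i)}}} \sum_{i=1}^{t} b_{\tau(i)} = \frac{p!}{r} \left[ a B + (r-1)\left( (-1)^p - B \right) \right]$, where $\mathbf{C} = (C_1,\dots,C_p)$ ranges over integer tuples with $1 \leq C_i \leq b_i - 1$ subject to the divisibility condition $r \mid \sum_{i=1}^{t} C_{\tau(i)}$. -/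
open Finset

lemma roots_indicator {r : ℕ} {ζ : ℂ} (hζ : IsPrimitiveRoot ζ r) (s : ℕ) :
    ∑ k ∈ range r, (ζ ^ s) ^ k = if r ∣ s then (r : ℂ) else 0 := by
  by_cases h : r ∣ s
  · rw [if_pos h, (hζ.pow_eq_one_iff_dvd s).2 h]; simp
  · rw [if_neg h]
    have hne : ζ ^ s ≠ 1 := fun hc => h ((hζ.pow_eq_one_iff_dvd s).1 hc)
    rw [geom_sum_eq hne]
    have h1 : (ζ ^ s) ^ r = 1 := by
      rw [← pow_mul, mul_comm, pow_mul, hζ.pow_eq_one, one_pow]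
    rw [h1]; simp

lemma factor_eval (x : ℂ) (m : ℕ) (hm : 1 ≤ m) (hx : x ≠ 1) (hxm : x ^ m = 1) :
    ∑ c ∈ Icc 1 (m - 1), x ^ c = -1 := by
  have hins : range m = insert 0 (Icc 1 (m - 1)) := by
    ext c; simp [Finset.mem_range, Finset.mem_Icc]; omega
  have h0 : (0 : ℕ) ∉ Icc 1 (m - 1) := by simp
  have h := geom_sum_eq hx m
  rw [hins, Finset.sum_insert h0, hxm, sub_self, zero_div, pow_zero] at h
  linear_combination h

lemma count_lemma (p r : ℕ) (hr : 1 ≤ r) (b : Fin p → ℕ)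
    (hb : ∀ i, 2 ≤ b i) (hrb : ∀ i, r ∣ b i) (T : Finset (Fin p)) :
    (((Fintype.piFinset (fun i => Finset.Icc 1 (b i - 1))).filter
        (fun C : Fin p → ℕ => r ∣ ∑ j ∈ T, C j)).card : ℤ) * r
    = ∏ i, ((b i : ℤ) - 1)
      + ((r : ℤ) - 1) * ((-1) ^ T.card * ∏ j ∈ Tᶜ, ((b j : ℤ) - 1)) := by
  have hr0 : (r : ℕ) ≠ 0 := by omega
  set ζ : ℂ := Complex.exp (2 * Real.pi * Complex.I / r) with hζdef
  have hζ : IsPrimitiveRoot ζ r := Complex.isPrimitiveRoot_exp r hr0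
  have hcardIcc : ∀ i, ((Finset.Icc 1 (b i - 1)).card : ℂ) = (b i : ℂ) - 1 := by
    intro i
    have h2 := hb i
    rw [Nat.card_Icc]
    have h3 : b i - 1 + 1 - 1 = b i - 1 := by omega
    rw [h3, Nat.cast_sub (by omega : 1 ≤ b i)]
    norm_num
  have hC : (((Fintype.piFinset (fun i => Finset.Icc 1 (b i - 1))).filter
        (fun C : Fin p → ℕ => r ∣ ∑ j ∈ T, C j)).card : ℂ) * r
      = ∏ i, ((b i : ℂ) - 1)
        + ((r : ℂ) - 1) * ((-1) ^ T.card * ∏ j ∈ Tᶜ, ((b j : ℂ) - 1)) := by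
    have hstart : (((Fintype.piFinset (fun i => Finset.Icc 1 (b i - 1))).filter
        (fun C : Fin p → ℕ => r ∣ ∑ j ∈ T, C j)).card : ℂ) * r
        = ∑ C ∈ Fintype.piFinset (fun i => Finset.Icc 1 (b i - 1)),
            if r ∣ ∑ j ∈ T, C j then (r : ℂ) else 0 := by
      rw [← Finset.sum_filter, Finset.sum_const, nsmul_eq_mul]
    rw [hstart]
    calc
      (∑ C ∈ Fintype.piFinset (fun i => Finset.Icc 1 (b i - 1)),
          if r ∣ ∑ j ∈ T, C j then (r : ℂ) else 0)
        = ∑ C ∈ Fintype.piFinset (fun i => Finset.Icc 1 (b i - 1)),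
            ∑ k ∈ range r, (ζ ^ (∑ j ∈ T, C j)) ^ k := by
          refine Finset.sum_congr rfl fun C _ => ?_
          rw [roots_indicator hζ]
      _ = ∑ k ∈ range r, ∑ C ∈ Fintype.piFinset (fun i => Finset.Icc 1 (b i - 1)),
            ∏ i, (if i ∈ T then (ζ ^ k) ^ (C i) else 1) := by
          rw [Finset.sum_comm]
          refine Finset.sum_congr rfl fun k _ => Finset.sum_congr rfl fun C _ => ?_
          rw [← Finset.prod_filter, Finset.filter_mem_eq_inter, Finset.univ_inter,
            Finset.prod_pow_eq_pow_sum, pow_right_comm]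
      _ = ∑ k ∈ range r, ∏ i, ∑ c ∈ Finset.Icc 1 (b i - 1),
            (if i ∈ T then (ζ ^ k) ^ c else 1) := by
          refine Finset.sum_congr rfl fun k _ => ?_
          rw [Finset.prod_univ_sum]
      _ = ∏ i, ((b i : ℂ) - 1)
          + ((r : ℂ) - 1) * ((-1) ^ T.card * ∏ j ∈ Tᶜ, ((b j : ℂ) - 1)) := by
          have hins : range r = insert 0 (Icc 1 (r - 1)) := by
            ext c; simp [Finset.mem_range, Finset.mem_Icc]; omega
          have h0 : (0 : ℕ) ∉ Icc 1 (r - 1) := by simp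
          rw [hins, Finset.sum_insert h0]
          have hzero : ∏ i, (∑ c ∈ Finset.Icc 1 (b i - 1),
              (if i ∈ T then (ζ ^ 0) ^ c else 1)) = ∏ i, ((b i : ℂ) - 1) := by
            refine Finset.prod_congr rfl fun i _ => ?_
            simp only [pow_zero, one_pow, ite_self, Finset.sum_const, nsmul_eq_mul, mul_one]
            exact hcardIcc i
          have hnz : ∀ k ∈ Icc 1 (r - 1), ∏ i, (∑ c ∈ Finset.Icc 1 (b i - 1),
              (if i ∈ T then (ζ ^ k) ^ c else 1))
              = (-1) ^ T.card * ∏ j ∈ Tᶜ, ((b j : ℂ) - 1) := by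
            intro k hk
            simp only [Finset.mem_Icc] at hk
            have hxne : ζ ^ k ≠ 1 :=
              hζ.pow_ne_one_of_pos_of_lt (by omega) (by omega)
            have hxm : ∀ i, (ζ ^ k) ^ (b i) = 1 := by
              intro i
              rw [← pow_mul, mul_comm, pow_mul, (hζ.pow_eq_one_iff_dvd (b i)).2 (hrb i),
                one_pow]
            have hfac : ∀ i : Fin p, (∑ c ∈ Finset.Icc 1 (b i - 1),
                (if i ∈ T then (ζ ^ k) ^ c else 1))
                = if i ∈ T then (-1 : ℂ) else ((b i : ℂ) - 1) := by
              intro i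
              by_cases hi : i ∈ T
              · simp only [if_pos hi]
                exact factor_eval _ _ (by have := hb i; omega) hxne (hxm i)
              · simp only [if_neg hi, Finset.sum_const, nsmul_eq_mul, mul_one]
                exact hcardIcc i
            rw [Finset.prod_congr rfl fun i _ => hfac i, Finset.prod_ite,
              Finset.prod_const]
            have e1 : univ.filter (fun x => x ∈ T) = T := by ext x; simp
            have e2 : univ.filter (fun x => x ∉ T) = Tᶜ := by ext x; simp
            rw [e1, e2]
          rw [hzero, Finset.sum_congr rfl hnz, Finset.sum_const, nsmul_eq_mul,
            Nat.card_Icc]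
          have : ((r - 1 + 1 - 1 : ℕ) : ℂ) = (r : ℂ) - 1 := by
            have h3 : r - 1 + 1 - 1 = r - 1 := by omega
            rw [h3, Nat.cast_sub hr]; norm_num
          rw [this]
  -- transfer to ℤ
  have h2 : ((((Fintype.piFinset (fun i => Finset.Icc 1 (b i - 1))).filter
        (fun C : Fin p → ℕ => r ∣ ∑ j ∈ T, C j)).card : ℤ) * r : ℤ)
      = ((∏ i, ((b i : ℤ) - 1)
      + ((r : ℤ) - 1) * ((-1) ^ T.card * ∏ j ∈ Tᶜ, ((b j : ℤ) - 1)) : ℤ)) := by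
    have := hC
    exact_mod_cast this
  exact h2

lemma perm_sum_apply {p : ℕ} (hp : 1 ≤ p) (g : Fin p → ℚ) (i : Fin p) :
    ∑ τ : Equiv.Perm (Fin p), g (τ i) = (p - 1).factorial * ∑ j, g j := by
  have key : ∀ i1 i2 : Fin p, (∑ τ : Equiv.Perm (Fin p), g (τ i1))
      = ∑ τ : Equiv.Perm (Fin p), g (τ i2) := by
    intro i1 i2
    have := Fintype.sum_equiv (Equiv.mulRight (Equiv.swap i1 i2))
      (fun τ : Equiv.Perm (Fin p) => g ((τ * Equiv.swap i1 i2) i1))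
      (fun τ : Equiv.Perm (Fin p) => g (τ i1)) (fun τ => rfl)
    rw [← this]
    refine Finset.sum_congr rfl fun τ _ => ?_
    simp [Equiv.Perm.mul_apply]
  have hsum : (p : ℚ) * (∑ τ : Equiv.Perm (Fin p), g (τ i))
      = (p.factorial : ℚ) * ∑ j, g j := by
    have h1 : ∑ i' : Fin p, (∑ τ : Equiv.Perm (Fin p), g (τ i'))
        = (p : ℚ) * (∑ τ : Equiv.Perm (Fin p), g (τ i)) := by
      rw [Finset.sum_congr rfl fun i' _ => key i' i, Finset.sum_const, nsmul_eq_mul]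
      simp
    rw [← h1, Finset.sum_comm]
    have h2 : ∀ τ : Equiv.Perm (Fin p), ∑ i' : Fin p, g (τ i') = ∑ j, g j :=
      fun τ => Equiv.sum_comp τ g
    rw [Finset.sum_congr rfl fun τ _ => h2 τ, Finset.sum_const, nsmul_eq_mul]
    simp [Fintype.card_perm]
  have hp0 : (p : ℚ) ≠ 0 := by positivity
  have hfac : (p.factorial : ℚ) = (p : ℚ) * ((p - 1).factorial : ℚ) := by
    obtain ⟨q, rfl⟩ := Nat.exists_eq_succ_of_ne_zero (by omega : p ≠ 0)
    push_cast [Nat.factorial_succ]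
    ring
  exact mul_left_cancel₀ hp0 (by rw [hsum, hfac]; ring)

lemma card_filter_lt {p t : ℕ} (htp : t ≤ p) :
    ((Finset.univ : Finset (Fin p)).filter (fun i : Fin p => (i : ℕ) < t)).card = t := by
  have : (Finset.univ : Finset (Fin p)).filter (fun i : Fin p => (i : ℕ) < t)
      = (Finset.univ : Finset (Fin t)).map ⟨Fin.castLE htp, Fin.castLE_injective htp⟩ := by
    ext i
    simp only [Finset.mem_filter, Finset.mem_univ, true_and, Finset.mem_map,
      Function.Embedding.coeFn_mk]
    constructor
    · intro h; exact ⟨⟨i, h⟩, rfl⟩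
    · rintro ⟨j, rfl⟩; exact j.2
  rw [this, Finset.card_map]
  simp

lemma image_compl {p : ℕ} (τ : Equiv.Perm (Fin p)) (S : Finset (Fin p)) :
    (S.image τ)ᶜ = Sᶜ.image τ := by
  ext j
  simp only [Finset.mem_compl, Finset.mem_image, not_exists]
  constructor
  · intro h
    exact ⟨τ.symm j, fun hc => (h (τ.symm j)) ⟨hc, by simp⟩, by simp⟩
  · rintro ⟨i, hi, rfl⟩ i' ⟨hi', he⟩
    exact hi (τ.injective he ▸ hi')

lemma telescope (u : ℕ → ℚ) (p : ℕ) :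
    ∑ t ∈ Finset.Icc 1 p, (-1 : ℚ) ^ t * (u t + u (t - 1)) = (-1) ^ p * u p - u 0 := by
  induction p with
  | zero => simp
  | succ q ih =>
      rw [Finset.sum_Icc_succ_top (by omega), ih]
      have : q + 1 - 1 = q := by omega
      rw [this, pow_succ]
      ring

lemma swap_prod_lemma {p : ℕ} (x : Fin p → ℚ) (t : ℕ) (ht : 1 ≤ t) (htp : t ≤ p)
    (i : Fin p) (hi : (i : ℕ) < t) :
    ∑ τ : Equiv.Perm (Fin p),
        x (τ i) * ∏ i' ∈ Finset.univ.filter (fun i' : Fin p => ¬ (i' : ℕ) < t), x (τ i')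
    = ∑ τ : Equiv.Perm (Fin p),
        ∏ i' ∈ Finset.univ.filter (fun i' : Fin p => ¬ (i' : ℕ) < t - 1), x (τ i') := by
  have hj : t - 1 < p := by omega
  set j : Fin p := ⟨t - 1, hj⟩ with hjdef
  set σ := Equiv.swap i j with hσdef
  have hre := Fintype.sum_equiv (Equiv.mulRight σ)
    (fun τ : Equiv.Perm (Fin p) =>
      x ((τ * σ) i) * ∏ i' ∈ Finset.univ.filter (fun i' : Fin p => ¬ (i' : ℕ) < t), x ((τ * σ) i'))
    (fun τ : Equiv.Perm (Fin p) =>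
      x (τ i) * ∏ i' ∈ Finset.univ.filter (fun i' : Fin p => ¬ (i' : ℕ) < t), x (τ i'))
    (fun τ => rfl)
  rw [← hre]
  refine Finset.sum_congr rfl fun τ _ => ?_
  have h1 : (τ * σ) i = τ j := by
    simp [hσdef, Equiv.Perm.mul_apply, Equiv.swap_apply_left]
  have h2 : ∀ i' ∈ Finset.univ.filter (fun i' : Fin p => ¬ (i' : ℕ) < t),
      x ((τ * σ) i') = x (τ i') := by
    intro i' hi'
    simp only [Finset.mem_filter, Finset.mem_univ, true_and, not_lt] at hi'
    have hne1 : i' ≠ i := by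
      intro h; subst h; omega
    have hne2 : i' ≠ j := by
      intro h; subst h; simp [hjdef] at hi'; omega
    simp [hσdef, Equiv.Perm.mul_apply, Equiv.swap_apply_of_ne_of_ne hne1 hne2]
  rw [h1, Finset.prod_congr rfl h2]
  have hins : Finset.univ.filter (fun i' : Fin p => ¬ (i' : ℕ) < t - 1)
      = insert j (Finset.univ.filter (fun i' : Fin p => ¬ (i' : ℕ) < t)) := by
    ext i'
    simp only [Finset.mem_filter, Finset.mem_univ, true_and, Finset.mem_insert, not_lt,
      Fin.ext_iff, hjdef]
    omega
  have hjn : j ∉ Finset.univ.filter (fun i' : Fin p => ¬ (i' : ℕ) < t) := by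
    simp [hjdef]; omega
  rw [hins, Finset.prod_insert hjn]

noncomputable def Ufun (p : ℕ) (x : Fin p → ℚ) (s : ℕ) : ℚ :=
  ∑ τ : Equiv.Perm (Fin p),
    ∏ i' ∈ Finset.univ.filter (fun i' : Fin p => ¬ (i' : ℕ) < s), x (τ i')

lemma Ufun_top (p : ℕ) (x : Fin p → ℚ) : Ufun p x p = p.factorial := by
  unfold Ufun
  have h : Finset.univ.filter (fun i' : Fin p => ¬ (i' : ℕ) < p) = ∅ := by
    ext i; simp [i.2]
  rw [h]
  simp [Fintype.card_perm]

lemma Ufun_zero (p : ℕ) (x : Fin p → ℚ) : Ufun p x 0 = p.factorial * ∏ i, x i := by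
  unfold Ufun
  have h : Finset.univ.filter (fun i' : Fin p => ¬ (i' : ℕ) < 0) = Finset.univ := by
    ext i; simp
  rw [h]
  rw [Finset.sum_congr rfl fun τ _ => Equiv.prod_comp τ x]
  simp [Fintype.card_perm, mul_comm]

lemma Ncount (p r : ℕ) (hr : 1 ≤ r) (b : Fin p → ℕ)
    (hb : ∀ i, 2 ≤ b i) (hrb : ∀ i, r ∣ b i) (t : ℕ) (htp : t ≤ p)
    (τ : Equiv.Perm (Fin p)) :
    (((Fintype.piFinset (fun i => Finset.Icc 1 (b i - 1))).filter
        (fun C : Fin p → ℕ =>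
          r ∣ ∑ i ∈ Finset.univ.filter (fun i : Fin p => (i : ℕ) < t), C (τ i))).card : ℚ)
    = (∏ i, ((b i : ℚ) - 1)
       + ((r : ℚ) - 1) * ((-1) ^ t
          * ∏ i ∈ Finset.univ.filter (fun i : Fin p => ¬ (i : ℕ) < t), ((b (τ i) : ℚ) - 1))) / r := by
  set T : Finset (Fin p) :=
    (Finset.univ.filter (fun i : Fin p => (i : ℕ) < t)).image τ with hT
  have hinj : ∀ x ∈ Finset.univ.filter (fun i : Fin p => (i : ℕ) < t),
      ∀ y ∈ Finset.univ.filter (fun i : Fin p => (i : ℕ) < t),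
        τ x = τ y → x = y := fun x _ y _ h => τ.injective h
  have hfe : (Fintype.piFinset (fun i => Finset.Icc 1 (b i - 1))).filter
        (fun C : Fin p → ℕ =>
          r ∣ ∑ i ∈ Finset.univ.filter (fun i : Fin p => (i : ℕ) < t), C (τ i))
      = (Fintype.piFinset (fun i => Finset.Icc 1 (b i - 1))).filter
        (fun C : Fin p → ℕ => r ∣ ∑ j ∈ T, C j) := by
    refine Finset.filter_congr fun C _ => ?_
    rw [hT, Finset.sum_image hinj]
  have hZ := count_lemma p r hr b hb hrb T
  have hcard : T.card = t := by
    rw [hT, Finset.card_image_of_injective _ τ.injective, card_filter_lt htp]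
  have hcompl : Tᶜ = (Finset.univ.filter (fun i : Fin p => ¬ (i : ℕ) < t)).image τ := by
    rw [hT, image_compl, Finset.compl_filter]
  have hinj2 : ∀ x ∈ Finset.univ.filter (fun i : Fin p => ¬ (i : ℕ) < t),
      ∀ y ∈ Finset.univ.filter (fun i : Fin p => ¬ (i : ℕ) < t),
        τ x = τ y → x = y := fun x _ y _ h => τ.injective h
  rw [hcard, hcompl, Finset.prod_image hinj2] at hZ
  have hQ : (((Fintype.piFinset (fun i => Finset.Icc 1 (b i - 1))).filter
        (fun C : Fin p → ℕ => r ∣ ∑ j ∈ T, C j)).card : ℚ) * r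
      = ∏ i, ((b i : ℚ) - 1)
        + ((r : ℚ) - 1) * ((-1) ^ t
          * ∏ i ∈ Finset.univ.filter (fun i : Fin p => ¬ (i : ℕ) < t), ((b (τ i) : ℚ) - 1)) := by
    exact_mod_cast hZ
  rw [hfe]
  have hr0 : (r : ℚ) ≠ 0 := by positivity
  field_simp at hQ ⊢
  linarith [hQ]

lemma perm_inner_sum (p r : ℕ) (hp : 1 ≤ p) (hr : 1 ≤ r) (b : Fin p → ℕ)
    (hb : ∀ i, 2 ≤ b i) (hrb : ∀ i, r ∣ b i) (t : ℕ) (ht : 1 ≤ t) (htp : t ≤ p) :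
    ∑ τ : Equiv.Perm (Fin p),
        ∑ C ∈ (Fintype.piFinset (fun i => Finset.Icc 1 (b i - 1))).filter
            (fun C : Fin p → ℕ =>
              r ∣ ∑ i ∈ Finset.univ.filter (fun i : Fin p => (i : ℕ) < t), C (τ i)),
          ∑ i ∈ Finset.univ.filter (fun i : Fin p => (i : ℕ) < t), (b (τ i) : ℚ)
    = (1 / r) * ((∏ i, ((b i : ℚ) - 1))
          * ((t : ℚ) * ((p - 1).factorial * ∑ i, (b i : ℚ)))
        + ((r : ℚ) - 1) * ((-1) ^ t * ((t : ℚ)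
          * (Ufun p (fun i => (b i : ℚ) - 1) t + Ufun p (fun i => (b i : ℚ) - 1) (t - 1))))) := by
  set x : Fin p → ℚ := fun i => (b i : ℚ) - 1 with hx
  set B : ℚ := ∏ i, ((b i : ℚ) - 1) with hB
  set c : ℚ := (r : ℚ) - 1 with hc
  set I : Finset (Fin p) := Finset.univ.filter (fun i : Fin p => (i : ℕ) < t) with hI
  set F : Finset (Fin p) := Finset.univ.filter (fun i : Fin p => ¬ (i : ℕ) < t) with hF
  have hE1 : ∑ τ : Equiv.Perm (Fin p), (∑ i ∈ I, (b (τ i) : ℚ))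
      = (t : ℚ) * ((p - 1).factorial * ∑ i, (b i : ℚ)) := by
    rw [Finset.sum_comm]
    rw [Finset.sum_congr rfl fun i _ => perm_sum_apply hp (fun j => (b j : ℚ)) i]
    rw [Finset.sum_const, hI, card_filter_lt htp, nsmul_eq_mul]
  have hE2 : ∑ τ : Equiv.Perm (Fin p), (∏ i ∈ F, x (τ i)) * (∑ i ∈ I, (b (τ i) : ℚ))
      = (t : ℚ) * (Ufun p x t + Ufun p x (t - 1)) := by
    have hS : ∀ τ : Equiv.Perm (Fin p),
        (∑ i ∈ I, (b (τ i) : ℚ)) = (t : ℚ) + ∑ i ∈ I, x (τ i) := by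
      intro τ
      have : ∀ i ∈ I, (b (τ i) : ℚ) = x (τ i) + 1 := by
        intro i _; simp [hx]
      rw [Finset.sum_congr rfl this, Finset.sum_add_distrib, Finset.sum_const,
        hI, card_filter_lt htp, nsmul_eq_mul, mul_one]
      ring
    have step : ∀ τ : Equiv.Perm (Fin p),
        (∏ i ∈ F, x (τ i)) * (∑ i ∈ I, (b (τ i) : ℚ))
        = (t : ℚ) * ∏ i ∈ F, x (τ i) + ∑ i ∈ I, (x (τ i) * ∏ i' ∈ F, x (τ i')) := by
      intro τ
      rw [hS τ, ← Finset.sum_mul]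
      ring
    rw [Finset.sum_congr rfl fun τ _ => step τ, Finset.sum_add_distrib]
    have h1 : ∑ τ : Equiv.Perm (Fin p), (t : ℚ) * ∏ i ∈ F, x (τ i)
        = (t : ℚ) * Ufun p x t := by
      rw [← Finset.mul_sum]; rfl
    have h2 : ∑ τ : Equiv.Perm (Fin p), ∑ i ∈ I, (x (τ i) * ∏ i' ∈ F, x (τ i'))
        = (t : ℚ) * Ufun p x (t - 1) := by
      rw [Finset.sum_comm]
      have hper : ∀ i ∈ I, ∑ τ : Equiv.Perm (Fin p), (x (τ i) * ∏ i' ∈ F, x (τ i'))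
          = Ufun p x (t - 1) := by
        intro i hi
        rw [hI, Finset.mem_filter] at hi
        exact swap_prod_lemma x t ht htp i hi.2
      rw [Finset.sum_congr rfl hper, Finset.sum_const, hI, card_filter_lt htp,
        nsmul_eq_mul]
    rw [h1, h2]
    ring
  have hNS : ∀ τ : Equiv.Perm (Fin p),
      ∑ C ∈ (Fintype.piFinset (fun i => Finset.Icc 1 (b i - 1))).filter
          (fun C : Fin p → ℕ => r ∣ ∑ i ∈ I, C (τ i)),
        ∑ i ∈ I, (b (τ i) : ℚ)
      = (1 / r) * (B * (∑ i ∈ I, (b (τ i) : ℚ))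
          + c * ((-1) ^ t * ((∏ i ∈ F, x (τ i)) * (∑ i ∈ I, (b (τ i) : ℚ))))) := by
    intro τ
    rw [Finset.sum_const, nsmul_eq_mul]
    rw [Ncount p r hr b hb hrb t htp τ]
    rw [hB, hc, hF, hx]
    ring
  rw [Finset.sum_congr rfl fun τ _ => hNS τ]
  rw [← Finset.mul_sum]
  have : ∑ τ : Equiv.Perm (Fin p),
      (B * (∑ i ∈ I, (b (τ i) : ℚ))
        + c * ((-1) ^ t * ((∏ i ∈ F, x (τ i)) * (∑ i ∈ I, (b (τ i) : ℚ)))))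
      = B * ((t : ℚ) * ((p - 1).factorial * ∑ i, (b i : ℚ)))
        + c * ((-1) ^ t * ((t : ℚ) * (Ufun p x t + Ufun p x (t - 1)))) := by
    rw [Finset.sum_add_distrib, ← Finset.mul_sum, hE1]
    congr 1
    rw [← Finset.mul_sum, ← Finset.mul_sum, hE2]
  rw [this]


/-- `∑_{t=1}^p (1/t) ∑_{τ ∈ S_p} ∑_{C, r ∣ ∑_{i≤t} C_{τ(i)}} ∑_{i=1}^t b_{τ(i)}
= (p!/r)[aB + (r-1)((-1)^p - B)]`, where `a = ∑ bᵢ`, `B = ∏ (bᵢ - 1)`, `r ∣ bᵢ`,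
and `C` ranges over tuples with `1 ≤ Cᵢ ≤ bᵢ - 1` with `r ∣ ∑_{i=1}^t C_{τ(i)}`. -/
theorem stmt_9 (p r : ℕ) (hp : 1 ≤ p) (hr : 1 ≤ r) (b : Fin p → ℕ)
    (hb : ∀ i, 2 ≤ b i) (hrb : ∀ i, r ∣ b i) :
    ∑ t ∈ Finset.Icc 1 p, (1 / (t : ℚ)) *
      ∑ τ : Equiv.Perm (Fin p),
        ∑ C ∈ (Fintype.piFinset (fun i => Finset.Icc 1 (b i - 1))).filter
            (fun C : Fin p → ℕ =>
              r ∣ ∑ i ∈ Finset.univ.filter (fun i : Fin p => (i : ℕ) < t), C (τ i)),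
          ∑ i ∈ Finset.univ.filter (fun i : Fin p => (i : ℕ) < t), (b (τ i) : ℚ)
    = (Nat.factorial p : ℚ) / r *
        ((∑ i, (b i : ℚ)) * (∏ i, ((b i : ℚ) - 1)) +
          ((r : ℚ) - 1) * ((-1) ^ p - ∏ i, ((b i : ℚ) - 1))) := by
  have hr0 : (r : ℚ) ≠ 0 := by positivity
  have hterm : ∀ t ∈ Finset.Icc 1 p, (1 / (t : ℚ)) *
      (∑ τ : Equiv.Perm (Fin p),
        ∑ C ∈ (Fintype.piFinset (fun i => Finset.Icc 1 (b i - 1))).filter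
            (fun C : Fin p → ℕ =>
              r ∣ ∑ i ∈ Finset.univ.filter (fun i : Fin p => (i : ℕ) < t), C (τ i)),
          ∑ i ∈ Finset.univ.filter (fun i : Fin p => (i : ℕ) < t), (b (τ i) : ℚ))
      = (1 / r) * ((∏ i, ((b i : ℚ) - 1)) * ((p - 1).factorial * ∑ i, (b i : ℚ)))
        + ((r : ℚ) - 1) / r * ((-1) ^ t
          * (Ufun p (fun i => (b i : ℚ) - 1) t + Ufun p (fun i => (b i : ℚ) - 1) (t - 1))) := by
    intro t ht
    rw [Finset.mem_Icc] at ht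
    rw [perm_inner_sum p r hp hr b hb hrb t ht.1 ht.2]
    have ht0 : (t : ℚ) ≠ 0 := by
      have : (0 : ℚ) < t := by exact_mod_cast ht.1
      exact ne_of_gt this
    field_simp
  rw [Finset.sum_congr rfl hterm, Finset.sum_add_distrib, Finset.sum_const,
    ← Finset.mul_sum, telescope (Ufun p (fun i => (b i : ℚ) - 1)) p,
    Ufun_top, Ufun_zero, Nat.card_Icc]
  have hp1 : p + 1 - 1 = p := by omega
  rw [hp1, nsmul_eq_mul]
  have hfac : (p.factorial : ℚ) = (p : ℚ) * ((p - 1).factorial : ℚ) := by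
    obtain ⟨q, rfl⟩ := Nat.exists_eq_succ_of_ne_zero (by omega : p ≠ 0)
    push_cast [Nat.factorial_succ]
    ring
  rw [hfac]
  field_simp
end
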